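/- arXiv:1805.11750 — 3 statements merged into one kernel-verified Lean document; each statement's English description precedes it below -/
import Mathlib

section
/- Let N ≥ 1 and M ≥ 0. Let q_1,…,q_M ∈ ℂ[z_1,…,z_N] be arbitrary polynomials, and for each j ∈ {1,…,N} let r_j(z) = ∏_{k=1}^{p_j} (z_j − a_{j,k}) with p_j ≥ 1 and integers a_{j,1},…,a_{j,p_j}. Then the set F = {z ∈ ℤ^N | q_k(z) = 0 for all k ∈ {1,…,M} and r_j(z) = 0 for all j ∈ {1,…,N}} is nonempty if and only if the constant polynomial 1 does not belong to the ideal of ℂ[z_1,…,z_N] generated by q_1,…,q_M, r_1,…,r_N. -/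
/-!
By the weak Nullstellensatz, `1` lies outside the ideal exactly when the generators have a common
complex zero; the factors of `r_j` force the `j`-th coordinate of any such zero to be one of the
integers `a_{j,k}`, so the common zero is automatically an integer point.
-/

open MvPolynomial

/-- The polynomial `r_j = ∏_{k=1}^{p_j} (z_j - a_{j,k})` with integer roots. -/
noncomputable def rPoly (N : ℕ) (p : Fin N → ℕ) (a : (j : Fin N) → Fin (p j) → ℤ)
    (j : Fin N) : MvPolynomial (Fin N) ℂ :=
  ∏ k : Fin (p j), (X j - C ((a j k : ℤ) : ℂ))

theorem MvPolynomial.exists_eval_eq_zero_iff_one_notMem_span {k σ : Type*} [Field k]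
    [IsAlgClosed k] [Finite σ] (S : Set (MvPolynomial σ k)) :
    (∃ x : σ → k, ∀ f ∈ S, eval x f = 0) ↔ (1 : MvPolynomial σ k) ∉ Ideal.span S := by
  constructor
  · rintro ⟨x, hx⟩ h1
    have hker : Ideal.span S ≤ RingHom.ker (eval x) := Ideal.span_le.mpr hx
    simpa using hker h1
  · intro h1
    obtain ⟨m, hm, hSm⟩ := Ideal.exists_le_maximal _ ((Ideal.ne_top_iff_one _).mpr h1)
    obtain ⟨x, rfl⟩ := isMaximal_iff_eq_vanishingIdeal_singleton.mp hm
    exact ⟨x, fun f hf => (mem_vanishingIdeal_singleton_iff x f).mp (hSm (Ideal.subset_span hf))⟩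

theorem eval_rPoly_eq_zero_iff {N : ℕ} {p : Fin N → ℕ} {a : (j : Fin N) → Fin (p j) → ℤ}
    {x : Fin N → ℂ} {j : Fin N} : eval x (rPoly N p a j) = 0 ↔ ∃ k, x j = a j k := by
  simp [rPoly, Finset.prod_eq_zero_iff, sub_eq_zero]

theorem exists_int_eq_of_eval_rPoly_eq_zero {N : ℕ} {p : Fin N → ℕ}
    {a : (j : Fin N) → Fin (p j) → ℤ} {x : Fin N → ℂ}
    (hx : ∀ j, eval x (rPoly N p a j) = 0) : ∃ z : Fin N → ℤ, (fun i => (z i : ℂ)) = x := by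
  choose k hk using fun j => eval_rPoly_eq_zero_iff.mp (hx j)
  exact ⟨fun j => a j (k j), funext fun j => (hk j).symm⟩

theorem F_nonempty_iff_one_not_mem_ideal_general (N M : ℕ)
    (q : Fin M → MvPolynomial (Fin N) ℂ)
    (p : Fin N → ℕ)
    (a : (j : Fin N) → Fin (p j) → ℤ) :
    (∃ z : Fin N → ℤ,
        (∀ k : Fin M, eval (fun i => ((z i : ℤ) : ℂ)) (q k) = 0) ∧
        (∀ j : Fin N, eval (fun i => ((z i : ℤ) : ℂ)) (rPoly N p a j) = 0))
      ↔ (1 : MvPolynomial (Fin N) ℂ) ∉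
          Ideal.span (Set.range q ∪ Set.range (rPoly N p a)) := by
  simp only [← exists_eval_eq_zero_iff_one_notMem_span, Set.mem_union, forall₂_or_left,
    Set.forall_mem_range]
  constructor
  · rintro ⟨z, hz⟩
    exact ⟨_, hz⟩
  · rintro ⟨x, hq, hr⟩
    obtain ⟨z, rfl⟩ := exists_int_eq_of_eval_rPoly_eq_zero hr
    exact ⟨z, hq, hr⟩

/-- **ideal-membership content of Theorem 3.** The set
`F = {z ∈ ℤ^N | q_k(z) = 0 ∀k, r_j(z) = 0 ∀j}` is nonempty if and only if the constant
polynomial `1` does not belong to the ideal of `ℂ[z_1,…,z_N]` generated by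
`q_1,…,q_M, r_1,…,r_N`. -/
theorem F_nonempty_iff_one_not_mem_ideal (N M : ℕ) (hN : 1 ≤ N)
    (q : Fin M → MvPolynomial (Fin N) ℂ)
    (p : Fin N → ℕ) (hp : ∀ j, 1 ≤ p j)
    (a : (j : Fin N) → Fin (p j) → ℤ) :
    (∃ z : Fin N → ℤ,
        (∀ k : Fin M, eval (fun i => ((z i : ℤ) : ℂ)) (q k) = 0) ∧
        (∀ j : Fin N, eval (fun i => ((z i : ℤ) : ℂ)) (rPoly N p a j) = 0))
      ↔ (1 : MvPolynomial (Fin N) ℂ) ∉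
          Ideal.span (Set.range q ∪ Set.range (rPoly N p a)) :=
  F_nonempty_iff_one_not_mem_ideal_general N M q p a
end

section
/- Suppose F is nonempty, and let z* ∈ F_m. Define x* ∈ ℤ^n by x*_k = d_k − h_k·z* for k ∈ {1,…,m} and x*_{m+j} = z*_j for j ∈ {1,…,n−m}. Then x* ∈ P, and x* is Pareto optimal for the cost functions f_1,…,f_n over P: there is no x ∈ P such that f_i(x_i) ≤ f_i(x*_i) for all i ∈ {1,…,n} and f_j(x_j) < f_j(x*_j) for at least one j ∈ {1,…,n}. -/
open Matrix

/-- The first `m` columns of `A` (the unimodular basis matrix `B`). -/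
def Bmat (m p : ℕ) (A : Matrix (Fin m) (Fin (m + p)) ℤ) : Matrix (Fin m) (Fin m) ℤ :=
  A.submatrix id (Fin.castAdd p)

/-- `d = B⁻¹ b ∈ ℤ^m`. -/
noncomputable def dVec (m p : ℕ) (A : Matrix (Fin m) (Fin (m + p)) ℤ) (b : Fin m → ℤ) :
    Fin m → ℤ :=
  (Bmat m p A)⁻¹ *ᵥ b

/-- `H = B⁻¹ A₂ ∈ ℤ^{m×p}`, where `A₂` consists of the last `p = n - m` columns. -/
noncomputable def Hmat (m p : ℕ) (A : Matrix (Fin m) (Fin (m + p)) ℤ) :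
    Matrix (Fin m) (Fin p) ℤ :=
  (Bmat m p A)⁻¹ * A.submatrix id (Fin.natAdd m)

/-- The feasible set `P = {x ∈ ℤ^n | Ax = b, 0 ⪯ x ⪯ u}`. -/
def Pset (m p : ℕ) (A : Matrix (Fin m) (Fin (m + p)) ℤ) (b : Fin m → ℤ)
    (u : Fin (m + p) → ℤ) : Set (Fin (m + p) → ℤ) :=
  {x | A *ᵥ x = b ∧ ∀ i, 0 ≤ x i ∧ x i ≤ u i}

/-- `D_j`: the set of minimizers of `f_{m+j}` over the integers in `[0, u_{m+j}]`. -/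
def Dset (m p : ℕ) (u : Fin (m + p) → ℤ) (f : Fin (m + p) → ℤ → ℝ) (j : Fin p) :
    Set ℤ :=
  {v | 0 ≤ v ∧ v ≤ u (Fin.natAdd m j) ∧
    ∀ w : ℤ, 0 ≤ w → w ≤ u (Fin.natAdd m j) →
      f (Fin.natAdd m j) v ≤ f (Fin.natAdd m j) w}

/-- `F = {z ∈ ℤ^{n-m} | z_j ∈ D_j ∀j, 0 ≤ d_k - h_k ⬝ z ≤ u_k ∀k}`. -/
noncomputable def Fset (m p : ℕ) (A : Matrix (Fin m) (Fin (m + p)) ℤ) (b : Fin m → ℤ)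
    (u : Fin (m + p) → ℤ) (f : Fin (m + p) → ℤ → ℝ) : Set (Fin p → ℤ) :=
  {z | (∀ j : Fin p, z j ∈ Dset m p u f j) ∧
    ∀ k : Fin m,
      0 ≤ dVec m p A b k - Hmat m p A k ⬝ᵥ z ∧
      dVec m p A b k - Hmat m p A k ⬝ᵥ z ≤ u (Fin.castAdd p k)}

/-- `g_k(z) = f_k(d_k - h_k ⬝ z)`. -/
noncomputable def gfun (m p : ℕ) (A : Matrix (Fin m) (Fin (m + p)) ℤ) (b : Fin m → ℤ)
    (f : Fin (m + p) → ℤ → ℝ) (k : Fin m) (z : Fin p → ℤ) : ℝ :=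
  f (Fin.castAdd p k) (dVec m p A b k - Hmat m p A k ⬝ᵥ z)

/-- **Theorem 4.** If `F ≠ ∅` and `z* ∈ F_m`, then the point `x*` with
`x*_k = d_k - h_k ⬝ z*` for `k ∈ {1,…,m}` and `x*_{m+j} = z*_j` is feasible and Pareto
optimal for the cost functions `f_1,…,f_n` over `P`. -/
theorem output_is_pareto_optimal (m p : ℕ) (hm : 0 < m) (hp : 0 < p)
    (A : Matrix (Fin m) (Fin (m + p)) ℤ) (b : Fin m → ℤ)
    (hB : (Bmat m p A).det = 1 ∨ (Bmat m p A).det = -1)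
    (u : Fin (m + p) → ℤ) (hu : ∀ i, 0 ≤ u i)
    (f : Fin (m + p) → ℤ → ℝ)
    (s : Equiv.Perm (Fin m))
    (FF : ℕ → Set (Fin p → ℤ))
    (hFF0 : FF 0 = Fset m p A b u f)
    (hFFsucc : ∀ i : Fin m,
      FF (↑i + 1) = {z ∈ FF ↑i | ∀ w ∈ FF ↑i,
        gfun m p A b f (s i) z ≤ gfun m p A b f (s i) w})
    (hne : (Fset m p A b u f).Nonempty)
    (zstar : Fin p → ℤ) (hzstar : zstar ∈ FF m)
    (xstar : Fin (m + p) → ℤ)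
    (hx1 : ∀ k : Fin m,
      xstar (Fin.castAdd p k) = dVec m p A b k - Hmat m p A k ⬝ᵥ zstar)
    (hx2 : ∀ j : Fin p, xstar (Fin.natAdd m j) = zstar j) :
    xstar ∈ Pset m p A b u ∧
    ¬∃ x ∈ Pset m p A b u,
        (∀ i : Fin (m + p), f i (x i) ≤ f i (xstar i)) ∧
        ∃ j : Fin (m + p), f j (x j) < f j (xstar j) := by

  -- Basic setup
  have hBu : IsUnit (Bmat m p A).det := by
    rcases hB with h | h <;> rw [h] <;> simp
  -- splitting of A *ᵥ x
  have hsplit : ∀ x : Fin (m + p) → ℤ,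
      A *ᵥ x = Bmat m p A *ᵥ (fun k => x (Fin.castAdd p k)) +
        A.submatrix id (Fin.natAdd m) *ᵥ (fun j => x (Fin.natAdd m j)) := by
    intro x
    ext i
    simp [Matrix.mulVec, dotProduct, Fin.sum_univ_add, Bmat]
  -- zstar belongs to every level of the chain
  have hmono : ∀ i : ℕ, (hi : i < m) → FF (i + 1) ⊆ FF i := by
    intro i hi
    have h2 := hFFsucc ⟨i, hi⟩
    simp only [Fin.val_mk] at h2
    rw [h2]
    exact fun z hz => hz.1
  have hchain : ∀ k, k ≤ m → zstar ∈ FF (m - k) := by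
    intro k hk
    induction k with
    | zero => simpa using hzstar
    | succ n ih =>
      have h1 := ih (Nat.le_of_succ_le hk)
      have hlt : m - (n + 1) < m := by omega
      have he : m - (n + 1) + 1 = m - n := by omega
      have := hmono (m - (n + 1)) hlt
      rw [he] at this
      exact this h1
  have hzmem : ∀ j, j ≤ m → zstar ∈ FF j := by
    intro j hj
    have := hchain (m - j) (by omega)
    rwa [show m - (m - j) = j by omega] at this
  have hzF : zstar ∈ Fset m p A b u f := by rw [← hFF0]; exact hzmem 0 (by omega)
  -- minimality of zstar at every round
  have hzmin : ∀ i : Fin m, ∀ w ∈ FF ↑i,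
      gfun m p A b f (s i) zstar ≤ gfun m p A b f (s i) w := by
    intro i
    have h1 : zstar ∈ FF (↑i + 1) := hzmem (↑i + 1) i.isLt
    rw [hFFsucc i] at h1
    exact h1.2
  -- recovering the first block of a feasible point
  have hrecover : ∀ x : Fin (m + p) → ℤ, A *ᵥ x = b → ∀ k : Fin m,
      x (Fin.castAdd p k) =
        dVec m p A b k - Hmat m p A k ⬝ᵥ (fun j => x (Fin.natAdd m j)) := by
    intro x hx k
    have h1 := hsplit x
    rw [hx] at h1
    have h2 : (Bmat m p A)⁻¹ *ᵥ b =
        (Bmat m p A)⁻¹ *ᵥ (Bmat m p A *ᵥ (fun k => x (Fin.castAdd p k))) +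
        (Bmat m p A)⁻¹ *ᵥ (A.submatrix id (Fin.natAdd m) *ᵥ (fun j => x (Fin.natAdd m j))) := by
      rw [← Matrix.mulVec_add, ← h1]
    rw [Matrix.mulVec_mulVec, Matrix.mulVec_mulVec, Matrix.nonsing_inv_mul _ hBu,
      Matrix.one_mulVec] at h2
    have h3 := congrFun h2 k
    simp only [Pi.add_apply] at h3
    have : dVec m p A b k = x (Fin.castAdd p k) +
        Hmat m p A k ⬝ᵥ (fun j => x (Fin.natAdd m j)) := h3
    omega
  -- feasibility of xstar
  have hxP : xstar ∈ Pset m p A b u := by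
    constructor
    · rw [hsplit xstar]
      have hx1' : (fun k => xstar (Fin.castAdd p k)) =
          dVec m p A b - Hmat m p A *ᵥ zstar := by
        funext k
        rw [hx1 k]; rfl
      have hx2' : (fun j => xstar (Fin.natAdd m j)) = zstar := funext hx2
      rw [hx1', hx2', Matrix.mulVec_sub, Matrix.mulVec_mulVec, dVec, Hmat,
        Matrix.mulVec_mulVec, ← Matrix.mul_assoc, Matrix.mul_nonsing_inv _ hBu,
        Matrix.one_mul, Matrix.one_mulVec]
      abel
    · intro i
      refine Fin.addCases (fun k => ?_) (fun j => ?_) i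
      · rw [hx1 k]
        exact (hzF.2 k)
      · rw [hx2 j]
        exact ⟨(hzF.1 j).1, (hzF.1 j).2.1⟩
  refine ⟨hxP, ?_⟩
  rintro ⟨x, hxPmem, hle, j, hlt⟩
  -- the candidate z from x
  set z : Fin p → ℤ := fun j => x (Fin.natAdd m j) with hzdef
  have hzx : ∀ k : Fin m, x (Fin.castAdd p k) = dVec m p A b k - Hmat m p A k ⬝ᵥ z :=
    hrecover x hxPmem.1
  -- z ∈ F
  have hzFmem : z ∈ Fset m p A b u f := by
    constructor
    · intro j
      refine ⟨(hxPmem.2 (Fin.natAdd m j)).1, (hxPmem.2 (Fin.natAdd m j)).2, ?_⟩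
      intro w hw1 hw2
      have h1 : f (Fin.natAdd m j) (z j) ≤ f (Fin.natAdd m j) (zstar j) := by
        have := hle (Fin.natAdd m j)
        rwa [hx2 j] at this
      exact le_trans h1 ((hzF.1 j).2.2 w hw1 hw2)
    · intro k
      have h1 := hxPmem.2 (Fin.castAdd p k)
      rw [hzx k] at h1
      exact h1
  -- z passes every round
  have hforward : ∀ i, i ≤ m → z ∈ FF i := by
    intro i hi
    induction i with
    | zero => rw [hFF0]; exact hzFmem
    | succ n ih =>
      have hn : n < m := hi
      have hzn := ih (Nat.le_of_lt hn)
      have h2 := hFFsucc ⟨n, hn⟩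
      simp only [Fin.val_mk] at h2
      rw [h2]
      refine ⟨hzn, fun w hw => ?_⟩
      have hmin := hzmin ⟨n, hn⟩ w (by simpa using hw)
      have hzz : gfun m p A b f (s ⟨n, hn⟩) z ≤ gfun m p A b f (s ⟨n, hn⟩) zstar := by
        unfold gfun
        rw [← hzx (s ⟨n, hn⟩), ← hx1 (s ⟨n, hn⟩)]
        exact hle (Fin.castAdd p (s ⟨n, hn⟩))
      exact le_trans hzz (by simpa using hmin)
  -- every coordinate has f j (xstar j) ≤ f j (x j)
  have hge : ∀ i : Fin (m + p), f i (xstar i) ≤ f i (x i) := by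
    intro i
    refine Fin.addCases (fun k => ?_) (fun jj => ?_) i
    · set i0 : Fin m := s.symm k with hi0
      have hk : s i0 = k := s.apply_symm_apply k
      have hzinFF : z ∈ FF ↑i0 := hforward ↑i0 (Nat.le_of_lt i0.isLt)
      have := hzmin i0 z hzinFF
      rw [hk] at this
      unfold gfun at this
      rwa [← hzx k, ← hx1 k] at this
    · rw [hx2 jj]
      exact (hzF.1 jj).2.2 (x (Fin.natAdd m jj)) (hxPmem.2 _).1 (hxPmem.2 _).2
  exact absurd (hge j) (not_le.mpr hlt)
end

section
/- Suppose F is nonempty, let z* ∈ F_m, and define x* ∈ ℤ^n by x*_k = d_k − h_k·z* for k ∈ {1,…,m} and x*_{m+j} = z*_j for j ∈ {1,…,n−m}. Then x* is a noncooperative Nash equilibrium of the multi-player problem: for every i ∈ {1,…,n} and every integer x̃_i such that the vector obtained from x* by replacing its i-th component with x̃_i lies in P, one has f_i(x*_i) ≤ f_i(x̃_i). -/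
/-!
Both kinds of players are handled by one observation. Since `B` is unimodular, `A x = b` forces
`x_B = d - H x_N`; so a unilateral deviation of a basic player `k` leaves `x_N = z*` unchanged and
hence cannot change `x_k` at all. A nonbasic player `m + j` plays `z*_j ∈ D_j`, a minimizer of
`f_{m+j}` over the whole box `[0, u_{m+j}]`, because the lexicographic refinement keeps
`z* ∈ F_m ⊆ F_0 = F`.
-/

open Matrix

lemma subset_zero_of_succ_subset {α : Type*} {S : ℕ → Set α} {m : ℕ}
    (h : ∀ i < m, S (i + 1) ⊆ S i) : ∀ t ≤ m, S t ⊆ S 0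
  | 0, _ => le_rfl
  | t + 1, ht => (h t ht).trans (subset_zero_of_succ_subset h t (Nat.le_of_succ_le ht))

lemma basic_eq_dVec_sub_Hmat_mulVec (m p : ℕ) (A : Matrix (Fin m) (Fin (m + p)) ℤ)
    (b : Fin m → ℤ) (hB : IsUnit (Bmat m p A).det) (x : Fin (m + p) → ℤ) (hx : A *ᵥ x = b) :
    (fun k => x (Fin.castAdd p k)) =
      dVec m p A b - Hmat m p A *ᵥ (fun j => x (Fin.natAdd m j)) := by
  have hsplit : Bmat m p A *ᵥ (fun k => x (Fin.castAdd p k))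
      + A.submatrix id (Fin.natAdd m) *ᵥ (fun j => x (Fin.natAdd m j)) = b := by
    ext r
    simpa [mulVec, dotProduct, Fin.sum_univ_add, Bmat] using congrFun hx r
  have hinv := congrArg ((Bmat m p A)⁻¹ *ᵥ ·) (eq_sub_of_add_eq hsplit)
  simp only [mulVec_sub, mulVec_mulVec, nonsing_inv_mul _ hB, one_mulVec] at hinv
  exact hinv

lemma eq_of_update_castAdd_mem_Pset (m p : ℕ) (A : Matrix (Fin m) (Fin (m + p)) ℤ)
    (b : Fin m → ℤ) (u : Fin (m + p) → ℤ) (hB : IsUnit (Bmat m p A).det)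
    (zstar : Fin p → ℤ) (xstar : Fin (m + p) → ℤ)
    (hx1 : ∀ k : Fin m, xstar (Fin.castAdd p k) = dVec m p A b k - Hmat m p A k ⬝ᵥ zstar)
    (hx2 : ∀ j : Fin p, xstar (Fin.natAdd m j) = zstar j) (k : Fin m) (xi : ℤ)
    (hP : Function.update xstar (Fin.castAdd p k) xi ∈ Pset m p A b u) :
    xi = xstar (Fin.castAdd p k) := by
  have hN : (fun j => Function.update xstar (Fin.castAdd p k) xi (Fin.natAdd m j)) = zstar := by
    ext j
    have hjk : Fin.natAdd m j ≠ Fin.castAdd p k := Fin.ne_of_gt (by simp [Fin.lt_def]; omega)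
    rw [Function.update_of_ne hjk, hx2]
  have hk := congrFun (basic_eq_dVec_sub_Hmat_mulVec m p A b hB _ hP.1) k
  simp only [Function.update_self, hN] at hk
  rw [hk, hx1]
  rfl

theorem output_is_nash_equilibrium_general (m p : ℕ)
    (A : Matrix (Fin m) (Fin (m + p)) ℤ) (b : Fin m → ℤ)
    (hB : (Bmat m p A).det = 1 ∨ (Bmat m p A).det = -1)
    (u : Fin (m + p) → ℤ)
    (f : Fin (m + p) → ℤ → ℝ)
    (s : Equiv.Perm (Fin m))
    (FF : ℕ → Set (Fin p → ℤ))
    (hFF0 : FF 0 = Fset m p A b u f)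
    (hFFsucc : ∀ i : Fin m,
      FF (↑i + 1) = {z ∈ FF ↑i | ∀ w ∈ FF ↑i,
        gfun m p A b f (s i) z ≤ gfun m p A b f (s i) w})
    (zstar : Fin p → ℤ) (hzstar : zstar ∈ FF m)
    (xstar : Fin (m + p) → ℤ)
    (hx1 : ∀ k : Fin m,
      xstar (Fin.castAdd p k) = dVec m p A b k - Hmat m p A k ⬝ᵥ zstar)
    (hx2 : ∀ j : Fin p, xstar (Fin.natAdd m j) = zstar j) :
    ∀ i : Fin (m + p), ∀ xi : ℤ,
      Function.update xstar i xi ∈ Pset m p A b u → f i (xstar i) ≤ f i xi := by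
  have hzF : zstar ∈ Fset m p A b u f :=
    hFF0 ▸ subset_zero_of_succ_subset
      (fun i hi => (hFFsucc ⟨i, hi⟩).trans_subset (Set.sep_subset _ _)) m le_rfl hzstar
  have hBu : IsUnit (Bmat m p A).det := by
    rcases hB with h | h <;> simp [h]
  refine Fin.addCases (fun k xi hP => ?_) (fun j xi hP => ?_)
  · rw [eq_of_update_castAdd_mem_Pset m p A b u hBu zstar xstar hx1 hx2 k xi hP]
  · have hbox := hP.2 (Fin.natAdd m j)
    rw [Function.update_self] at hbox
    rw [hx2]
    exact (hzF.1 j).2.2 xi hbox.1 hbox.2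

/-- If `F ≠ ∅` and `z* ∈ F_m`, then the corresponding point `x*` is a
noncooperative Nash equilibrium: for every player `i` and every unilateral feasible
deviation `x̃_i` (i.e. replacing the `i`-th component of `x*` by `x̃_i` stays in `P`),
one has `f_i(x*_i) ≤ f_i(x̃_i)`. -/
theorem output_is_nash_equilibrium (m p : ℕ) (hm : 0 < m) (hp : 0 < p)
    (A : Matrix (Fin m) (Fin (m + p)) ℤ) (b : Fin m → ℤ)
    (hB : (Bmat m p A).det = 1 ∨ (Bmat m p A).det = -1)
    (u : Fin (m + p) → ℤ) (hu : ∀ i, 0 ≤ u i)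
    (f : Fin (m + p) → ℤ → ℝ)
    (s : Equiv.Perm (Fin m))
    (FF : ℕ → Set (Fin p → ℤ))
    (hFF0 : FF 0 = Fset m p A b u f)
    (hFFsucc : ∀ i : Fin m,
      FF (↑i + 1) = {z ∈ FF ↑i | ∀ w ∈ FF ↑i,
        gfun m p A b f (s i) z ≤ gfun m p A b f (s i) w})
    (hne : (Fset m p A b u f).Nonempty)
    (zstar : Fin p → ℤ) (hzstar : zstar ∈ FF m)
    (xstar : Fin (m + p) → ℤ)
    (hx1 : ∀ k : Fin m,
      xstar (Fin.castAdd p k) = dVec m p A b k - Hmat m p A k ⬝ᵥ zstar)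
    (hx2 : ∀ j : Fin p, xstar (Fin.natAdd m j) = zstar j) :
    ∀ i : Fin (m + p), ∀ xi : ℤ,
      Function.update xstar i xi ∈ Pset m p A b u → f i (xstar i) ≤ f i xi :=
  output_is_nash_equilibrium_general m p A b hB u f s FF hFF0 hFFsucc zstar hzstar xstar hx1 hx2
end
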